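/- arXiv:math/0701284 — 2 statements merged into one kernel-verified Lean document; each statement's English description precedes it below -/
import Mathlib

section
/- Let A be a uniformly distributed random map on 𝒜 and let b ∈ 𝒜 be any map whose image has cardinality q (1 ≤ q ≤ N). Then for every 1 ≤ p ≤ q, P(the image of A ∘ b has cardinality p) = S(q,p) · (N)_p / N^q, where S(q,p) is the Stirling number of the second kind (the number of partitions of a q-element set into p nonempty blocks) and (N)_p = N·(N−1)⋯(N−p+1). Consequently, the image-size process (|B_n({1,…,N})|)_{n≥0} of the composition chain B_n = A_n ∘ ⋯ ∘ A_0 is a Markov chain on {1,…,N} with these transition probabilities. -/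
open MeasureTheory

/-- Stirling numbers of the second kind: `stirling2 q p` is the number of partitions of a
`q`-element set into `p` nonempty blocks. -/
def stirling2 : ℕ → ℕ → ℕ
  | 0, 0 => 1
  | 0, _ + 1 => 0
  | _ + 1, 0 => 0
  | n + 1, k + 1 => (k + 1) * stirling2 n (k + 1) + stirling2 n k

/-- The transition matrix `M^{(N)}_{q,p} = S(q,p) · (N)_p / N^q` (as an `ℝ≥0∞` number);
note `S(q,p) = 0` for `p > q`, so no case distinction is needed. -/
noncomputable def transMat (N q p : ℕ) : ENNReal :=
  ((stirling2 q p * Nat.descFactorial N p : ℕ) : ENNReal) / (N : ENNReal) ^ q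

/-!
Maps `f : Fin q → Fin N` with image of size `p` are counted by recursion on `q`: an added point
either lands in the current image (`p` choices) or adds a new value (`N - (p - 1)` choices), which
is the Stirling recurrence, so there are `S(q,p) (N)_p` of them. Since `|A(b(univ))| = p` only
depends on `A` restricted to the `q`-set `b(univ)`, exactly `S(q,p) (N)_p N^(N-q)` of the `N^N`
maps `A` qualify. For the chain, `B_0, …, B_n` are functions of `A_0, …, A_n`, the vector
`(A_0, …, A_n, A_(n+1))` is uniform, and `B_(n+1) = A_(n+1) ∘ B_n`; the same count, done
fibrewise over `(A_0, …, A_n)`, gives the Markov property.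
-/

open Finset
open scoped ENNReal

theorem Fin.image_cons_univ {β : Type*} [DecidableEq β] {q : ℕ} (x : β) (g : Fin q → β) :
    univ.image (Fin.cons x g : Fin (q + 1) → β) = insert x (univ.image g) := by
  ext y
  simp [Fin.exists_fin_succ, eq_comm]

section Counting

variable {α β γ : Type*} [Fintype α] [Fintype β] [DecidableEq β]

theorem card_filter_card_insert_eq (t : Finset β) (p : ℕ) :
    #{x | #(insert x t) = p + 1} =
      (if #t = p + 1 then p + 1 else 0) + (if #t = p then Fintype.card β - p else 0) := by
  by_cases h₁ : #t = p + 1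
  · have : ({x | #(insert x t) = p + 1} : Finset β) = t := by
      ext x; by_cases hx : x ∈ t <;> simp [hx, h₁]
    simp [this, h₁]
  by_cases h₀ : #t = p
  · have : ({x | #(insert x t) = p + 1} : Finset β) = tᶜ := by
      ext x; by_cases hx : x ∈ t <;> simp [hx, h₀]
    simp [this, h₀, card_compl]
  · have : ({x | #(insert x t) = p + 1} : Finset β) = ∅ := by
      ext x; by_cases hx : x ∈ t <;> simp [hx] <;> omega
    simp [this, h₁, h₀]

theorem card_filter_card_image_fin (q p : ℕ) :
    #{f : Fin q → β | #(univ.image f) = p} =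
      stirling2 q p * (Fintype.card β).descFactorial p := by
  induction q generalizing p with
  | zero => cases p <;> simp [stirling2]
  | succ q ih =>
    have hcons : #{f : Fin (q + 1) → β | #(univ.image f) = p} =
        ∑ g : Fin q → β, #{x | #(insert x (univ.image g)) = p} := by
      simp only [card_filter]
      rw [← (Fin.consEquiv fun _ => β).sum_comp, Fintype.sum_prod_type, sum_comm]
      simp [Fin.consEquiv, Fin.image_cons_univ]
    rw [hcons]
    cases p with
    | zero => simp [stirling2]
    | succ k =>
      simp only [card_filter_card_insert_eq, sum_add_distrib, ← sum_filter, sum_const,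
        smul_eq_mul, ih, stirling2, Nat.descFactorial_succ]
      ring

variable [DecidableEq α]

theorem card_filter_card_image (p : ℕ) :
    #{f : α → β | #(univ.image f) = p} =
      stirling2 (Fintype.card α) p * (Fintype.card β).descFactorial p := by
  rw [← card_filter_card_image_fin]
  refine card_equiv ((Fintype.equivFin α).arrowCongr (Equiv.refl β)) fun f => ?_
  simp only [mem_filter, mem_univ, true_and]
  rw [show (Fintype.equivFin α).arrowCongr (Equiv.refl β) f = f ∘ (Fintype.equivFin α).symm
    from rfl, image_comp, image_univ_equiv]

theorem card_filter_card_image_finset (T : Finset α) (p : ℕ) :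
    #{f : α → β | #(T.image f) = p} =
      stirling2 #T p * (Fintype.card β).descFactorial p *
        Fintype.card β ^ (Fintype.card α - #T) := by
  have hT : ∀ f : α → β, T.image f = univ.image fun i : T => f i := fun f => by
    ext; simp
  rw [card_equiv (Equiv.piEquivPiSubtypeProd (· ∈ T) fun _ => β)
      (t := {z | #(univ.image z.1) = p}) fun f => by simp only [mem_filter, mem_univ, hT]; rfl,
    ← univ_product_univ, filter_product_left (fun g : T → β => #(univ.image g) = p),
    card_product, card_filter_card_image]
  simp [Fintype.card_subtype_compl]

theorem card_filter_card_image_comp [Fintype γ] (b : γ → α) (p : ℕ) :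
    #{a : α → β | #(univ.image (a ∘ b)) = p} =
      stirling2 #(univ.image b) p * (Fintype.card β).descFactorial p *
        Fintype.card β ^ (Fintype.card α - #(univ.image b)) := by
  simp only [image_comp, card_filter_card_image_finset]

end Counting

theorem transMat_eq_div {N q : ℕ} (hq : q ≤ N) (p : ℕ) :
    transMat N q p =
      ((stirling2 q p * N.descFactorial p * N ^ (N - q) : ℕ) : ℝ≥0∞) / (N ^ N : ℕ) := by
  have hpow : (N : ℝ≥0∞) ^ (N - q) ≠ 0 := by
    rcases N.eq_zero_or_pos with rfl | hN
    · simp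
    · exact pow_ne_zero _ (by exact_mod_cast hN.ne')
  rw [transMat, ← ENNReal.mul_div_mul_right _ _ hpow (by simp), ← pow_add,
    Nat.add_sub_cancel' hq]
  push_cast
  rfl

section Probability

variable {Ω α γ : Type*} [MeasurableSpace Ω] {P : Measure Ω} [Fintype α] [Fintype γ]

theorem measure_prefix_next_eq_inv_card (A : ℕ → Ω → α)
    (hunif : ∀ i a, P {ω | A i ω = a} = (Fintype.card α : ℝ≥0∞)⁻¹)
    (hindep : ∀ (s : Finset ℕ) (a : ℕ → α),
      P {ω | ∀ i ∈ s, A i ω = a i} = ∏ i ∈ s, P {ω | A i ω = a i})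
    (M : ℕ) (z : (Fin M → α) × α) :
    P {ω | ((fun i : Fin M => A i ω), A M ω) = z} =
      (Fintype.card ((Fin M → α) × α) : ℝ≥0∞)⁻¹ := by
  have hset : {ω | ((fun i : Fin M => A i ω), A M ω) = z} =
      {ω | ∀ i ∈ range (M + 1), A i ω = if h : i < M then z.1 ⟨i, h⟩ else z.2} := by
    ext ω
    simp only [mem_range, Nat.forall_lt_succ_right, Prod.ext_iff, funext_iff,
      Fin.forall_iff]
    simp +contextual
  rw [hset, hindep, prod_congr rfl fun i _ => hunif i _, prod_const, card_range,
    Fintype.card_prod, Fintype.card_fun, Fintype.card_fin, ← pow_succ, Nat.cast_pow,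
    ENNReal.inv_pow]

variable [IsProbabilityMeasure P]

-- Only subadditivity is available: the events `{X = c}` need not be measurable.

theorem measure_mem_finset_eq_sum (X : Ω → γ) (hX : ∑ c, P {ω | X ω = c} = 1)
    (S : Finset γ) : P {ω | X ω ∈ S} = ∑ c ∈ S, P {ω | X ω = c} := by
  classical
  have hle : ∀ S : Finset γ, P {ω | X ω ∈ S} ≤ ∑ c ∈ S, P {ω | X ω = c} := fun S =>
    calc P {ω | X ω ∈ S} = P (⋃ c ∈ S, {ω | X ω = c}) := by congr 1; ext; simp
      _ ≤ _ := measure_biUnion_finset_le _ _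
  have hcompl : ∑ c ∈ Sᶜ, P {ω | X ω = c} ≠ ∞ :=
    ne_top_of_le_ne_top ENNReal.one_ne_top (hX ▸ sum_le_univ_sum_of_nonneg (by simp))
  refine le_antisymm (hle S) ((ENNReal.add_le_add_iff_right hcompl).1 ?_)
  calc ∑ c ∈ S, P {ω | X ω = c} + ∑ c ∈ Sᶜ, P {ω | X ω = c}
      = P ({ω | X ω ∈ S} ∪ {ω | X ω ∈ Sᶜ}) := by
        rw [sum_add_sum_compl, hX, ← measure_univ (μ := P)]
        congr 1; ext; simp [em]
    _ ≤ P {ω | X ω ∈ S} + P {ω | X ω ∈ Sᶜ} := measure_union_le _ _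
    _ ≤ P {ω | X ω ∈ S} + ∑ c ∈ Sᶜ, P {ω | X ω = c} := by gcongr; exact hle Sᶜ

theorem measure_setOf_eq_card_div_of_uniform (X : Ω → γ)
    (hX : ∀ c, P {ω | X ω = c} = (Fintype.card γ : ℝ≥0∞)⁻¹) (Q : γ → Prop) [DecidablePred Q] :
    P {ω | Q (X ω)} = #{c | Q c} / Fintype.card γ := by
  have : Nonempty γ := (nonempty_of_isProbabilityMeasure P).map X
  have hsum : ∑ c, P {ω | X ω = c} = 1 := by
    simp only [hX, sum_const, card_univ, nsmul_eq_mul]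
    exact ENNReal.mul_inv_cancel (by simp) (by simp)
  have hQ : {ω | Q (X ω)} = {ω | X ω ∈ ({c | Q c} : Finset γ)} := by ext; simp
  rw [hQ, measure_mem_finset_eq_sum X hsum, sum_congr rfl fun c _ => hX c, sum_const,
    nsmul_eq_mul, div_eq_mul_inv]

theorem measure_inter_card_image_comp_eq [DecidableEq α] {β : Type*} [Fintype β]
    (U : Ω → β) (X : Ω → α → α)
    (hUX : ∀ z, P {ω | (U ω, X ω) = z} = (Fintype.card (β × (α → α)) : ℝ≥0∞)⁻¹)
    (G : β → α → α) (S : Finset β) {q : ℕ} (hS : ∀ u ∈ S, #(univ.image (G u)) = q) (p : ℕ) :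
    P {ω | U ω ∈ S ∧ #(univ.image (X ω ∘ G (U ω))) = p} =
      transMat (Fintype.card α) q p * P {ω | U ω ∈ S} := by
  classical
  rw [measure_setOf_eq_card_div_of_uniform _ hUX
      fun z => z.1 ∈ S ∧ #(univ.image (z.2 ∘ G z.1)) = p,
    measure_setOf_eq_card_div_of_uniform _ hUX fun z => z.1 ∈ S]
  rcases S.eq_empty_or_nonempty with rfl | ⟨u, hu⟩
  · simp
  have hq : q ≤ Fintype.card α := hS u hu ▸ card_le_univ _
  have hcount : #{z : β × (α → α) | z.1 ∈ S ∧ #(univ.image (z.2 ∘ G z.1)) = p} =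
      #S * (stirling2 q p * (Fintype.card α).descFactorial p *
        Fintype.card α ^ (Fintype.card α - q)) := by
    simp only [card_filter, Fintype.sum_prod_type, ite_and, sum_ite_irrel, sum_const_zero,
      Fintype.sum_ite_mem]
    refine sum_const_nat fun u hu => ?_
    rw [← card_filter, card_filter_card_image_comp, hS u hu]
  have hcount' : #{z : β × (α → α) | z.1 ∈ S} = #S * Fintype.card (α → α) := by
    rw [← univ_product_univ, filter_product_left (· ∈ S), card_product, card_univ,
      filter_univ_mem]
  rw [hcount, hcount', transMat_eq_div hq, Fintype.card_prod, Fintype.card_fun]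
  push_cast
  rw [ENNReal.mul_div_mul_right _ _ (by simp) (by simp), ENNReal.div_eq_inv_mul,
    ENNReal.div_eq_inv_mul, ENNReal.div_eq_inv_mul, ENNReal.mul_inv (by simp) (by simp)]
  ring

end Probability

section CompositionChain

variable {α : Type*}

def compChain (f : ℕ → α → α) : ℕ → α → α
  | 0 => f 0
  | n + 1 => f (n + 1) ∘ compChain f n

theorem compChain_congr {f g : ℕ → α → α} {m : ℕ} (h : ∀ i ≤ m, f i = g i) :
    compChain f m = compChain g m := by
  induction m with
  | zero => exact h 0 le_rfl
  | succ m ih => rw [compChain, compChain, h (m + 1) le_rfl, ih fun i hi => h i (by omega)]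

theorem eq_compChain {Ω : Type*} {A B : ℕ → Ω → α → α} (hB0 : ∀ ω, B 0 ω = A 0 ω)
    (hBs : ∀ n ω, B (n + 1) ω = A (n + 1) ω ∘ B n ω) (m : ℕ) (ω : Ω) :
    B m ω = compChain (fun i => A i ω) m := by
  induction m with
  | zero => exact hB0 ω
  | succ m ih => rw [hBs, ih, compChain]

end CompositionChain

theorem measure_history_inter_eq {Ω α : Type*} [MeasurableSpace Ω] {P : Measure Ω}
    [IsProbabilityMeasure P] [Fintype α] [DecidableEq α] (A B : ℕ → Ω → α → α)
    (hunif : ∀ i a, P {ω | A i ω = a} = (Fintype.card (α → α) : ℝ≥0∞)⁻¹)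
    (hindep : ∀ (s : Finset ℕ) (a : ℕ → α → α),
      P {ω | ∀ i ∈ s, A i ω = a i} = ∏ i ∈ s, P {ω | A i ω = a i})
    (hB0 : ∀ ω, B 0 ω = A 0 ω) (hBs : ∀ n ω, B (n + 1) ω = A (n + 1) ω ∘ B n ω)
    (n : ℕ) (qs : ℕ → ℕ) (p : ℕ) :
    P ({ω | ∀ m ≤ n, #(univ.image (B m ω)) = qs m} ∩ {ω | #(univ.image (B (n + 1) ω)) = p}) =
      transMat (Fintype.card α) (qs n) p * P {ω | ∀ m ≤ n, #(univ.image (B m ω)) = qs m} := by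
  classical
  -- `chain u m` rebuilds `B m` from `u = (A 0, …, A n)`; the padding by `id` is never reached.
  let chain (u : Fin (n + 1) → α → α) : ℕ → α → α :=
    compChain fun i => if h : i < n + 1 then u ⟨i, h⟩ else id
  let S : Finset (Fin (n + 1) → α → α) := {u | ∀ m ≤ n, #(univ.image (chain u m)) = qs m}
  have hB : ∀ ω, ∀ m ≤ n, B m ω = chain (fun i => A i ω) m := fun ω m hm => by
    rw [eq_compChain hB0 hBs]
    exact compChain_congr fun i hi => by simp [show i < n + 1 by omega]
  have hhist : {ω | ∀ m ≤ n, #(univ.image (B m ω)) = qs m} =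
      {ω | (fun i : Fin (n + 1) => A i ω) ∈ S} := by
    ext ω
    simp +contextual only [Set.mem_ofPred_eq, mem_filter, mem_univ, true_and, S, hB ω]
  have hnext : ∀ ω, B (n + 1) ω = A (n + 1) ω ∘ chain (fun i => A i ω) n := fun ω => by
    rw [hBs, hB ω n le_rfl]
  rw [hhist, ← measure_inter_card_image_comp_eq (fun ω (i : Fin (n + 1)) => A i ω) (A (n + 1))
    (measure_prefix_next_eq_inv_card A hunif hindep (n + 1)) (fun u => chain u n) S
    fun u hu => (mem_filter.1 hu).2 n le_rfl]
  congr 1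
  ext ω
  simp [hnext]

theorem image_size_markov_chain_general
    (N : ℕ)
    {Ω : Type*} [MeasurableSpace Ω] (P : Measure Ω) [IsProbabilityMeasure P]
    (A B : ℕ → Ω → (Fin N → Fin N))
    (hunif : ∀ (p : ℕ) (a : Fin N → Fin N), P {ω | A p ω = a} = ((N : ENNReal) ^ N)⁻¹)
    (hindep : ∀ (s : Finset ℕ) (a : ℕ → (Fin N → Fin N)),
      P {ω | ∀ p ∈ s, A p ω = a p} = ∏ p ∈ s, P {ω | A p ω = a p})
    (hB0 : ∀ ω, B 0 ω = A 0 ω)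
    (hBs : ∀ n ω, B (n + 1) ω = A (n + 1) ω ∘ B n ω) :
    -- one-step distribution of the image size of `A ∘ b`
    (∀ (b : Fin N → Fin N) (q p : ℕ), 1 ≤ p → p ≤ q → q ≤ N →
      (Finset.image b Finset.univ).card = q →
      ∀ r : ℕ, P {ω | (Finset.image (A r ω ∘ b) Finset.univ).card = p} = transMat N q p) ∧
    -- Markov property of the image-size process with transition matrix `transMat N`
    (∀ (n : ℕ) (qs : ℕ → ℕ) (p : ℕ),
      P ({ω | ∀ m ≤ n, (Finset.image (B m ω) Finset.univ).card = qs m} ∩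
          {ω | (Finset.image (B (n + 1) ω) Finset.univ).card = p}) =
        transMat N (qs n) p *
          P {ω | ∀ m ≤ n, (Finset.image (B m ω) Finset.univ).card = qs m}) := by
  have hunif' : ∀ i a, P {ω | A i ω = a} = (Fintype.card (Fin N → Fin N) : ℝ≥0∞)⁻¹ := by
    simpa using hunif
  refine ⟨fun b q p _ _ hqN hb r => ?_, fun n qs p => ?_⟩
  · rw [measure_setOf_eq_card_div_of_uniform (A r) (hunif' r) fun a => #(univ.image (a ∘ b)) = p,
      card_filter_card_image_comp, hb, transMat_eq_div hqN]
    simp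
  · simpa using measure_history_inter_eq A B hunif' hindep hB0 hBs n qs p

/-- If `A` is a uniformly distributed random map on `𝒜 = {1,…,N}^{1,…,N}` and `b` is a map
whose image has cardinality `q`, then for every `1 ≤ p ≤ q`,
`P(|image (A ∘ b)| = p) = S(q,p) · (N)_p / N^q`.  Consequently the image-size process
`(|B_n({1,…,N})|)_n` of the composition chain `B_n = A_n ∘ ⋯ ∘ A_0` of i.i.d. uniform random
maps is a Markov chain with these transition probabilities. -/
theorem image_size_markov_chain
    (N : ℕ) (hN : 1 ≤ N)
    {Ω : Type*} [MeasurableSpace Ω] (P : Measure Ω) [IsProbabilityMeasure P]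
    (A B : ℕ → Ω → (Fin N → Fin N))
    (hunif : ∀ (p : ℕ) (a : Fin N → Fin N), P {ω | A p ω = a} = ((N : ENNReal) ^ N)⁻¹)
    (hindep : ∀ (s : Finset ℕ) (a : ℕ → (Fin N → Fin N)),
      P {ω | ∀ p ∈ s, A p ω = a p} = ∏ p ∈ s, P {ω | A p ω = a p})
    (hB0 : ∀ ω, B 0 ω = A 0 ω)
    (hBs : ∀ n ω, B (n + 1) ω = A (n + 1) ω ∘ B n ω) :
    -- one-step distribution of the image size of `A ∘ b`
    (∀ (b : Fin N → Fin N) (q p : ℕ), 1 ≤ p → p ≤ q → q ≤ N →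
      (Finset.image b Finset.univ).card = q →
      ∀ r : ℕ, P {ω | (Finset.image (A r ω ∘ b) Finset.univ).card = p} = transMat N q p) ∧
    -- Markov property of the image-size process with transition matrix `transMat N`
    (∀ (n : ℕ) (qs : ℕ → ℕ) (p : ℕ),
      P ({ω | ∀ m ≤ n, (Finset.image (B m ω) Finset.univ).card = qs m} ∩
          {ω | (Finset.image (B (n + 1) ω) Finset.univ).card = p}) =
        transMat N (qs n) p *
          P {ω | ∀ m ≤ n, (Finset.image (B m ω) Finset.univ).card = qs m}) :=
  image_size_markov_chain_general N P A B hunif hindep hB0 hBs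
end

section
/- There exists a constant χ₁ > 0 such that for all integers N ≥ 1 and all integers q with 2 ≤ q ≤ N/2, Σ_{p=1}^{q−2} S(q,p)·(N)_p / N^q ≤ χ₁ q⁴/N². Equivalently, for the Markov chain R^{(N,i)} with transition matrix M^{(N)}: for all n ≥ 0 and all i, P[R^{(N,i)}_{n+1} ≤ R^{(N,i)}_n − 2 | R^{(N,i)}_n = q] ≤ χ₁ q⁴/N² whenever 2 ≤ q ≤ N/2 and the conditioning event has positive probability. -/
open MeasureTheory Filter

universe u

/-- `R` is (a version of) the Markov chain with transition matrix `K` started at `i`: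
its finite dimensional distributions are the required ones. -/
def IsMarkovChainWith {Ω : Type*} [MeasurableSpace Ω] (P : Measure Ω)
    (R : ℕ → Ω → ℕ) (i : ℕ) (K : ℕ → ℕ → ENNReal) : Prop :=
  ∀ (n : ℕ) (q : ℕ → ℕ),
    P {ω | ∀ m ≤ n, R m ω = q m} =
      (if q 0 = i then 1 else 0) * ∏ m ∈ Finset.range n, K (q m) (q (m + 1))

/-- First hitting time of the absorbing state `1`. -/
noncomputable def hitOne {Ω : Type*} (R : ℕ → Ω → ℕ) (ω : Ω) : ℕ :=
  sInf {n | R n ω = 1}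

/-!
Since `∑_{p ≤ q} S(q,p) (N)_p = N^q`, `S(q,q) = 1` and `S(q,q-1) = C(q,2)`, the sum over
`p ≤ q - 2` equals `N^q - (N)_q - C(q,2) (N)_{q-1}`. The second-order Weierstrass bound
`N^k ≤ (N)_k + C(k,2) N^(k-1)`, applied to `(N)_q` and to `(N)_{q-1}`, bounds this by
`C(q,2) C(q-1,2) N^(q-2) ≤ q⁴ N^(q-2)`.

For the chain, `P(R_{n+1} ∈ T, R_n = q) ≤ (∑_{p ∈ T} M_{q,p}) P(R_n = q)` follows by covering
both events with cylinder sets of paths. Since `R` is not assumed measurable, `P` acts as an outer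
measure, and the lower bound for `P(R_n = q)` comes from the cylinders covering `Ω` with total
mass `1`.
-/

section Stirling

open Finset

theorem stirling2_eq_stirlingSecond : stirling2 = Nat.stirlingSecond := by
  funext n k
  induction n generalizing k with
  | zero => cases k <;> rfl
  | succ n ih =>
    cases k with
    | zero => rfl
    | succ k => rw [stirling2, Nat.stirlingSecond_succ_succ, ih, ih]

theorem Nat.descFactorial_succ_add_mul (N k : ℕ) :
    N.descFactorial (k + 1) + k * N.descFactorial k = N * N.descFactorial k := by
  rw [Nat.descFactorial_succ, ← add_mul]
  rcases le_or_gt k N with hk | hk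
  · rw [Nat.sub_add_cancel hk]
  · rw [Nat.descFactorial_eq_zero_iff_lt.mpr hk, mul_zero, mul_zero]

theorem Nat.sum_stirlingSecond_mul_descFactorial (n N : ℕ) :
    ∑ k ∈ range (n + 1), n.stirlingSecond k * N.descFactorial k = N ^ n := by
  induction n with
  | zero => simp
  | succ n ih =>
    have hshift : ∑ k ∈ range (n + 1), (k + 1) * n.stirlingSecond (k + 1) * N.descFactorial (k + 1)
        = ∑ k ∈ range (n + 1), k * n.stirlingSecond k * N.descFactorial k := by
      have h := sum_range_succ' (fun k => k * n.stirlingSecond k * N.descFactorial k) (n + 1)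
      rw [sum_range_succ, Nat.stirlingSecond_eq_zero_of_lt n.lt_succ_self] at h
      simpa only [mul_zero, zero_mul, add_zero, Nat.cast_id] using h.symm
    calc ∑ k ∈ range (n + 2), (n + 1).stirlingSecond k * N.descFactorial k
        = ∑ k ∈ range (n + 1), ((k + 1) * n.stirlingSecond (k + 1) * N.descFactorial (k + 1)
            + n.stirlingSecond k * N.descFactorial (k + 1)) := by
          simp only [sum_range_succ' _ (n + 1), Nat.stirlingSecond_succ_succ,
            Nat.stirlingSecond_succ_zero, zero_mul, add_zero, add_mul]
      _ = ∑ k ∈ range (n + 1),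
            n.stirlingSecond k * (N.descFactorial (k + 1) + k * N.descFactorial k) := by
          rw [sum_add_distrib, hshift, ← sum_add_distrib]
          exact sum_congr rfl fun k _ => by ring
      _ = N ^ (n + 1) := by
          simp only [Nat.descFactorial_succ_add_mul, mul_left_comm _ N, ← mul_sum, ih, pow_succ']

theorem Nat.pow_le_descFactorial_add_choose_two_mul (N k : ℕ) :
    N ^ (k + 1) ≤ N.descFactorial (k + 1) + (k + 1).choose 2 * N ^ k := by
  induction k with
  | zero => simp
  | succ k ih =>
    calc N ^ (k + 2) = N * N ^ (k + 1) := _root_.pow_succ' _ _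
      _ ≤ (N - (k + 1) + (k + 1)) * N ^ (k + 1) := by gcongr; omega
      _ ≤ (N - (k + 1)) * (N.descFactorial (k + 1) + (k + 1).choose 2 * N ^ k)
            + (k + 1) * N ^ (k + 1) := by
          rw [add_mul]; gcongr
      _ ≤ (N - (k + 1)) * N.descFactorial (k + 1) + (k + 1).choose 2 * (N * N ^ k)
            + (k + 1) * N ^ (k + 1) := by
          rw [mul_add, mul_left_comm]; gcongr; exact N.sub_le _
      _ = N.descFactorial (k + 2) + (k + 2).choose 2 * N ^ (k + 1) := by
          rw [N.descFactorial_succ (k + 1), Nat.choose_succ_succ' (k + 1), Nat.choose_one_right]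
          ring

theorem Nat.sum_Icc_stirlingSecond_mul_descFactorial_le (N k : ℕ) :
    ∑ p ∈ Icc 1 k, (k + 2).stirlingSecond p * N.descFactorial p ≤
      (k + 2).choose 2 * (k + 1).choose 2 * N ^ k := by
  have htotal := Nat.sum_stirlingSecond_mul_descFactorial (k + 2) N
  rw [sum_range_succ, sum_range_succ, range_eq_Ico, sum_eq_sum_Ico_succ_bot k.succ_pos, zero_add,
    Nat.succ_eq_add_one, Ico_add_one_right_eq_Icc, Nat.stirlingSecond_self,
    Nat.stirlingSecond_succ_self_left, Nat.stirlingSecond_succ_zero] at htotal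
  have h2 := N.pow_le_descFactorial_add_choose_two_mul (k + 1)
  have h1 := Nat.mul_le_mul_left ((k + 2).choose 2) (N.pow_le_descFactorial_add_choose_two_mul k)
  nlinarith

theorem sum_Icc_stirling2_div_pow_le {N : ℕ} (hN : 0 < N) {q : ℕ} (hq : 2 ≤ q) :
    ∑ p ∈ Icc 1 (q - 2), ((stirling2 q p * N.descFactorial p : ℕ) : ℝ) / (N : ℝ) ^ q ≤
      (q : ℝ) ^ 4 / (N : ℝ) ^ 2 := by
  obtain ⟨k, rfl⟩ := Nat.exists_eq_add_of_le' hq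
  have hchoose : (k + 2).choose 2 * (k + 1).choose 2 ≤ (k + 2) ^ 4 :=
    calc (k + 2).choose 2 * (k + 1).choose 2 ≤ (k + 2) ^ 2 * (k + 2) ^ 2 := by
          gcongr
          · exact Nat.choose_le_pow _ _
          · exact (Nat.choose_le_choose 2 (by omega)).trans (Nat.choose_le_pow _ _)
      _ = (k + 2) ^ 4 := by ring
  have hsum : ∑ p ∈ Icc 1 k, stirling2 (k + 2) p * N.descFactorial p ≤ (k + 2) ^ 4 * N ^ k := by
    rw [stirling2_eq_stirlingSecond]
    exact (Nat.sum_Icc_stirlingSecond_mul_descFactorial_le N k).trans (by gcongr)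
  rw [Nat.add_sub_cancel, ← sum_div, ← Nat.cast_sum,
    div_le_div_iff₀ (by positivity) (by positivity)]
  calc (↑(∑ p ∈ Icc 1 k, stirling2 (k + 2) p * N.descFactorial p) : ℝ) * (N : ℝ) ^ 2
      ≤ ((k + 2) ^ 4 * N ^ k : ℕ) * (N : ℝ) ^ 2 := by gcongr
    _ = ((k + 2 : ℕ) : ℝ) ^ 4 * (N : ℝ) ^ (k + 2) := by push_cast; ring

end Stirling

open scoped ENNReal

theorem MeasureTheory.tsum_measure_le_measure_biUnion_of_iUnion_eq_univ {Ω ι : Type*}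
    [MeasurableSpace Ω] [Countable ι] {μ : Measure Ω} [IsFiniteMeasure μ] {A : ι → Set Ω}
    (hcover : ⋃ i, A i = Set.univ) (hsum : ∑' i, μ (A i) ≤ μ Set.univ) (J : Set ι) :
    ∑' i : J, μ (A i) ≤ μ (⋃ i ∈ J, A i) := by
  have hsplit : ∑' i : J, μ (A i) + ∑' i : ↥Jᶜ, μ (A i) = ∑' i, μ (A i) :=
    ENNReal.summable.tsum_add_tsum_compl (f := fun i => μ (A i)) ENNReal.summable
  have hfin : ∑' i : ↥Jᶜ, μ (A i) ≠ ∞ :=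
    ne_top_of_le_ne_top (measure_ne_top μ Set.univ) (hsplit ▸ le_add_self |>.trans hsum)
  refine ENNReal.le_of_add_le_add_right hfin ?_
  calc ∑' i : J, μ (A i) + ∑' i : ↥Jᶜ, μ (A i) ≤ μ Set.univ := hsplit ▸ hsum
    _ = μ ((⋃ i ∈ J, A i) ∪ ⋃ i ∈ Jᶜ, A i) := by
        rw [← Set.biUnion_union, Set.union_compl_self, Set.biUnion_univ, hcover]
    _ ≤ μ (⋃ i ∈ J, A i) + ∑' i : ↥Jᶜ, μ (A i) :=
        (measure_union_le _ _).trans (add_le_add_right (measure_biUnion_le μ Jᶜ.to_countable A) _)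

theorem ENNReal.tsum_fin_snoc {α : Type*} {n : ℕ} (f : (Fin (n + 1) → α) → ℝ≥0∞) :
    ∑' v, f v = ∑' w, ∑' a, f (Fin.snoc w a) := by
  rw [← (Fin.snocEquiv fun _ => α).tsum_eq, ENNReal.tsum_prod', ENNReal.tsum_comm]
  rfl

noncomputable def pathWeight (i : ℕ) (K : ℕ → ℕ → ℝ≥0∞) {n : ℕ} (w : Fin (n + 1) → ℕ) : ℝ≥0∞ :=
  (if w 0 = i then 1 else 0) * ∏ m : Fin n, K (w m.castSucc) (w m.succ)

theorem pathWeight_snoc (i : ℕ) (K : ℕ → ℕ → ℝ≥0∞) {n : ℕ} (w : Fin (n + 1) → ℕ) (p : ℕ) :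
    pathWeight i K (Fin.snoc w p : Fin (n + 2) → ℕ) = pathWeight i K w * K (w (Fin.last n)) p := by
  have h0 : (Fin.snoc w p : Fin (n + 2) → ℕ) 0 = w 0 := Fin.snoc_castSucc (i := 0) ..
  simp_rw [pathWeight, Fin.prod_univ_castSucc, Fin.succ_castSucc, Fin.snoc_castSucc, h0,
    Fin.succ_last, Fin.snoc_last, mul_assoc]

theorem tsum_pathWeight (i : ℕ) {K : ℕ → ℕ → ℝ≥0∞} (hK : ∀ q, ∑' p, K q p = 1) (n : ℕ) :
    ∑' w : Fin (n + 1) → ℕ, pathWeight i K w = 1 := by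
  induction n with
  | zero =>
    rw [← (Equiv.funUnique (Fin 1) ℕ).symm.tsum_eq]
    simp [pathWeight]
  | succ n ih =>
    simp only [ENNReal.tsum_fin_snoc, pathWeight_snoc, ENNReal.tsum_mul_left, hK, mul_one, ih]

def pathCylinder {Ω : Type*} (R : ℕ → Ω → ℕ) {n : ℕ} (w : Fin (n + 1) → ℕ) : Set Ω :=
  {ω | ∀ j : Fin (n + 1), R j ω = w j}

theorem iUnion_pathCylinder_eq_univ {Ω : Type*} (R : ℕ → Ω → ℕ) (n : ℕ) :
    ⋃ w : Fin (n + 1) → ℕ, pathCylinder R w = Set.univ :=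
  Set.eq_univ_of_forall fun ω => Set.mem_iUnion.2 ⟨fun j => R j ω, fun _ => rfl⟩

namespace IsMarkovChainWith

variable {Ω : Type*} [MeasurableSpace Ω] {P : Measure Ω} {R : ℕ → Ω → ℕ} {i : ℕ}
  {K : ℕ → ℕ → ℝ≥0∞}

theorem measure_pathCylinder (hR : IsMarkovChainWith P R i K) {n : ℕ} (w : Fin (n + 1) → ℕ) :
    P (pathCylinder R w) = pathWeight i K w := by
  set q : ℕ → ℕ := Function.extend Fin.val w 0
  have hq (j : Fin (n + 1)) : q j = w j := Fin.val_injective.extend_apply w 0 j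
  have hset : pathCylinder R w = {ω | ∀ m ≤ n, R m ω = q m} := by
    ext ω
    refine ⟨fun h m hm => ?_, fun h j => (hq j) ▸ h j (Fin.is_le j)⟩
    exact (h ⟨m, by omega⟩).trans (hq ⟨m, by omega⟩).symm
  rw [hset, hR n q, pathWeight, ← Fin.prod_univ_eq_prod_range (fun m => K (q m) (q (m + 1)))]
  simp only [← hq, Fin.val_castSucc, Fin.val_succ, Fin.val_zero]

theorem tsum_pathWeight_le_measure [IsProbabilityMeasure P] (hR : IsMarkovChainWith P R i K)
    (hK : ∀ q, ∑' p, K q p = 1) (n q : ℕ) :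
    ∑' w : Fin (n + 1) → ℕ, (if w (Fin.last n) = q then pathWeight i K w else 0) ≤
      P {ω | R n ω = q} := by
  set J : Set (Fin (n + 1) → ℕ) := {w | w (Fin.last n) = q}
  have hsum : ∑' w : Fin (n + 1) → ℕ, P (pathCylinder R w) ≤ P Set.univ := by
    simp [hR.measure_pathCylinder, tsum_pathWeight i hK]
  calc _ = ∑' w : J, P (pathCylinder R (w : Fin (n + 1) → ℕ)) := by
        rw [_root_.tsum_subtype J fun w => P (pathCylinder R w)]
        exact tsum_congr fun w => by simp [J, Set.indicator_apply, hR.measure_pathCylinder]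
    _ ≤ P (⋃ w ∈ J, pathCylinder R w) :=
        tsum_measure_le_measure_biUnion_of_iUnion_eq_univ (iUnion_pathCylinder_eq_univ R n) hsum J
    _ ≤ P {ω | R n ω = q} :=
        measure_mono (Set.iUnion₂_subset fun w hw ω hω => (hω (Fin.last n)).trans hw)

theorem measure_succ_mem_inter_le [IsProbabilityMeasure P] (hR : IsMarkovChainWith P R i K)
    (hK : ∀ q, ∑' p, K q p = 1) (n q : ℕ) (T : Set ℕ) :
    P ({ω | R (n + 1) ω ∈ T} ∩ {ω | R n ω = q}) ≤ (∑' p : T, K q p) * P {ω | R n ω = q} := by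
  set J : Set (Fin (n + 2) → ℕ) := {v | v (Fin.last n).castSucc = q ∧ v (Fin.last (n + 1)) ∈ T}
  have hcover : {ω | R (n + 1) ω ∈ T} ∩ {ω | R n ω = q} ⊆ ⋃ v ∈ J, pathCylinder R v :=
    fun ω ⟨hT, hq⟩ =>
      Set.mem_biUnion (x := fun j : Fin (n + 2) => R j ω) (show _ ∈ J from ⟨hq, hT⟩) fun _ => rfl
  calc _ ≤ P (⋃ v ∈ J, pathCylinder R v) := measure_mono hcover
    _ ≤ ∑' v : J, P (pathCylinder R (v : Fin (n + 2) → ℕ)) := measure_biUnion_le P J.to_countable _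
    _ = ∑' w : Fin (n + 1) → ℕ,
          (if w (Fin.last n) = q then pathWeight i K w else 0) * ∑' p : T, K q p := by
        rw [_root_.tsum_subtype J fun v => P (pathCylinder R v), ENNReal.tsum_fin_snoc (n := n + 1),
          _root_.tsum_subtype T]
        refine tsum_congr fun w => ?_
        rw [← ENNReal.tsum_mul_left]
        refine tsum_congr fun p => ?_
        have hJ : Fin.snoc w p ∈ J ↔ w (Fin.last n) = q ∧ p ∈ T := by
          simp only [J, Set.mem_ofPred_eq, Fin.snoc_castSucc, Fin.snoc_last]
        by_cases hw : w (Fin.last n) = q <;> by_cases hp : p ∈ T <;>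
          simp [hJ, hw, hp, hR.measure_pathCylinder, pathWeight_snoc]
    _ ≤ (∑' p : T, K q p) * P {ω | R n ω = q} := by
        rw [ENNReal.tsum_mul_right, mul_comm]
        gcongr
        exact hR.tsum_pathWeight_le_measure hK n q

end IsMarkovChainWith

theorem transMat_eq_ofReal {N : ℕ} (hN : 0 < N) (q p : ℕ) :
    transMat N q p =
      ENNReal.ofReal (((stirling2 q p * N.descFactorial p : ℕ) : ℝ) / (N : ℝ) ^ q) := by
  rw [transMat, ENNReal.ofReal_div_of_pos (by positivity), ENNReal.ofReal_natCast,
    ENNReal.ofReal_pow (Nat.cast_nonneg N), ENNReal.ofReal_natCast]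

theorem tsum_transMat {N : ℕ} (hN : 0 < N) (q : ℕ) : ∑' p, transMat N q p = 1 := by
  have hvanish (p : ℕ) (hp : p ∉ Finset.range (q + 1)) : transMat N q p = 0 := by
    rw [Finset.mem_range, not_lt] at hp
    simp [transMat, stirling2_eq_stirlingSecond, Nat.stirlingSecond_eq_zero_of_lt hp]
  rw [tsum_eq_sum hvanish]
  simp only [transMat, div_eq_mul_inv, ← Finset.sum_mul, ← Nat.cast_sum,
    stirling2_eq_stirlingSecond, Nat.sum_stirlingSecond_mul_descFactorial, Nat.cast_pow]
  exact ENNReal.mul_inv_cancel (pow_ne_zero _ (by exact_mod_cast hN.ne'))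
    (ENNReal.pow_ne_top (ENNReal.natCast_ne_top N))

theorem tsum_setOf_add_two_le_transMat {N : ℕ} (hN : 0 < N) {q : ℕ} (hq : 1 ≤ q) :
    ∑' p : {p | p + 2 ≤ q}, transMat N q p =
      ENNReal.ofReal (∑ p ∈ Finset.Icc 1 (q - 2),
        ((stirling2 q p * N.descFactorial p : ℕ) : ℝ) / (N : ℝ) ^ q) := by
  have hzero : transMat N q 0 = 0 := by
    obtain ⟨k, rfl⟩ := Nat.exists_eq_add_of_le' hq
    simp [transMat, stirling2_eq_stirlingSecond]
  rw [ENNReal.ofReal_sum_of_nonneg fun _ _ => by positivity, tsum_subtype, tsum_eq_sum]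
  · refine Finset.sum_congr rfl fun p hp => ?_
    rw [Finset.mem_Icc] at hp
    have hpT : p ∈ {p | p + 2 ≤ q} := by simp only [Set.mem_ofPred_eq]; omega
    rw [Set.indicator_of_mem hpT, transMat_eq_ofReal hN]
  · intro p hp
    rw [Finset.mem_Icc] at hp
    rcases Nat.eq_zero_or_pos p with rfl | hp0
    · simp [hzero]
    · have hpT : p ∉ {p | p + 2 ≤ q} := by simp only [Set.mem_ofPred_eq]; omega
      exact Set.indicator_of_notMem hpT _

/-- There is a constant `χ₁ > 0` such that for all `N ≥ 1` and `2 ≤ q ≤ N/2`,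
`Σ_{p=1}^{q−2} S(q,p)(N)_p/N^q ≤ χ₁ q⁴/N²`; equivalently, for the Markov chain `R^{(N,i)}`,
`P[R_{n+1} ≤ R_n − 2 | R_n = q] ≤ χ₁ q⁴/N²` whenever `2 ≤ q ≤ N/2` and the conditioning
event has positive probability. -/
theorem jump_by_two_bound :
    ∃ χ₁ : ℝ, 0 < χ₁ ∧
      (∀ N q : ℕ, 1 ≤ N → 2 ≤ q → (q : ℝ) ≤ (N : ℝ) / 2 →
        (∑ p ∈ Finset.Icc 1 (q - 2),
            ((stirling2 q p * Nat.descFactorial N p : ℕ) : ℝ) / (N : ℝ) ^ q) ≤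
          χ₁ * (q : ℝ) ^ 4 / (N : ℝ) ^ 2) ∧
      (∀ (N i : ℕ) (Ω : Type u) (_ : MeasurableSpace Ω) (P : Measure Ω),
        IsProbabilityMeasure P →
        ∀ (R : ℕ → Ω → ℕ), IsMarkovChainWith P R i (transMat N) →
        ∀ (n q : ℕ), 2 ≤ q → (q : ℝ) ≤ (N : ℝ) / 2 →
          0 < P {ω | R n ω = q} →
          P ({ω | R (n + 1) ω + 2 ≤ R n ω} ∩ {ω | R n ω = q}) ≤
            ENNReal.ofReal (χ₁ * (q : ℝ) ^ 4 / (N : ℝ) ^ 2) * P {ω | R n ω = q}) := by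
  refine ⟨1, one_pos, fun N q hN hq _ => ?_, ?_⟩
  · rw [one_mul]
    exact sum_Icc_stirling2_div_pow_le hN hq
  intro N i Ω _ P _ R hR n q hq hqN _
  have hN : 0 < N := by
    have : (2 : ℝ) ≤ q := by exact_mod_cast hq
    exact_mod_cast (by linarith : (0 : ℝ) < N)
  have hevent : {ω | R (n + 1) ω + 2 ≤ R n ω} ∩ {ω | R n ω = q} =
      {ω | R (n + 1) ω ∈ {p | p + 2 ≤ q}} ∩ {ω | R n ω = q} :=
    Set.ext fun ω => and_congr_left fun (h : R n ω = q) => by rw [Set.mem_ofPred_eq, h]; rfl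
  rw [hevent, one_mul]
  calc _ ≤ (∑' p : {p | p + 2 ≤ q}, transMat N q p) * P {ω | R n ω = q} :=
        hR.measure_succ_mem_inter_le (tsum_transMat hN) n q _
    _ ≤ _ := by
        rw [tsum_setOf_add_two_le_transMat hN (by omega)]
        gcongr
        exact sum_Icc_stirling2_div_pow_le hN hq
end
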